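/- arXiv:1110.2761 — 8 statements merged into one kernel-verified Lean document; each statement's English description precedes it below -/
import Mathlib

section
/- The image of the linear map ℤ^{n-1} → ℤ^{n-1} given by the Cartan matrix C(A_{n-1}) equals the subgroup {u ∈ ℤ^{n-1} : ∑_{i=1}^{n-1} i·u_i ≡ 0 (mod n)}. In particular, this image has index n in ℤ^{n-1}. -/
/-!
Let `w = (1, 2, …, m)` and `e` the last basis vector of `ℤ^m`, `m = n - 1`. The Cartan matrix `C`
is minus the discrete second difference with zero boundary values, so `C w = n • e`; as `C` is
symmetric, `w ⬝ C v = n * v_m`, which gives one inclusion. Conversely, with `G i j = min (i, j)`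
(1-based) one has `C G = 1 + e wᵀ`, so if `w ⬝ u = n k` then `C (G u - k w) = u`. The index is
then that of the kernel of the surjection `u ↦ w ⬝ u mod n` onto `ZMod n`.
-/

/-- The Cartan matrix of the root system `A_m`. -/
def cartanA (m : ℕ) : Matrix (Fin m) (Fin m) ℤ :=
  Matrix.of fun i j => if i = j then 2 else if (i : ℕ) + 1 = j ∨ (j : ℕ) + 1 = i then -1 else 0

open Matrix

theorem cartanA_transpose (m : ℕ) : (cartanA m)ᵀ = cartanA m := by
  ext i j
  simp only [cartanA, transpose_apply, of_apply, eq_comm (a := i), or_comm]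

theorem Finset.sum_range_ite_succ_eq {M : Type*} [AddCommGroup M] (F : ℕ → M) {p m : ℕ}
    (hp : p < m) :
    ∑ j ∈ Finset.range m, (if j + 1 = p then F (j + 1) else 0) = F p - if p = 0 then F 0 else 0 := by
  have h := Finset.sum_range_succ' (fun j => if j = p then F j else 0) m
  simp only [Finset.sum_ite_eq', Finset.mem_range, if_pos (Nat.lt_succ_of_lt hp)] at h
  rw [h]
  simp only [@eq_comm ℕ 0, add_sub_cancel_right]

theorem cartanA_mulVec_apply (m : ℕ) (F : ℕ → ℤ) (p : Fin m) :
    (cartanA m *ᵥ fun j => F (j + 1)) p =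
      2 * F (p + 1) - F p - F (p + 2) + (if (p : ℕ) = 0 then F 0 else 0)
        + (if (p : ℕ) + 1 = m then F (m + 1) else 0) := by
  have hp := p.isLt
  have hentry (j : ℕ) :
      (if (p : ℕ) = j then 2 else if (p : ℕ) + 1 = j ∨ j + 1 = p then -1 else 0) * F (j + 1)
        = 2 * (if j = p then F (j + 1) else 0) - (if j = p + 1 then F (j + 1) else 0)
          - (if j + 1 = p then F (j + 1) else 0) := by
    by_cases h1 : (p : ℕ) = j <;> by_cases h2 : (p : ℕ) + 1 = j <;> by_cases h3 : j + 1 = p <;>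
      simp [h1, h2, h3, eq_comm] <;> omega
  simp only [mulVec, dotProduct, cartanA, of_apply, Fin.ext_iff, hentry, Finset.sum_sub_distrib,
    ← Finset.mul_sum]
  rw [Fin.sum_univ_eq_sum_range (fun j => if j = p then F (j + 1) else 0),
    Fin.sum_univ_eq_sum_range (fun j => if j = p + 1 then F (j + 1) else 0),
    Fin.sum_univ_eq_sum_range (fun j => if j + 1 = p then F (j + 1) else 0),
    Finset.sum_ite_eq', Finset.sum_ite_eq', Finset.sum_range_ite_succ_eq F hp]
  simp only [Finset.mem_range, if_pos hp]
  rcases (show (p : ℕ) + 1 = m ∨ (p : ℕ) + 1 < m by omega) with hl | hl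
  · rw [if_neg hl.not_lt, if_pos hl, show m + 1 = (p : ℕ) + 2 by omega]
    ring
  · rw [if_pos hl, if_neg hl.ne]
    ring

namespace CartanA

def ramp (m : ℕ) : Fin m → ℤ := fun i => (i : ℕ) + 1

def lastIndicator (m : ℕ) : Fin m → ℤ := fun p => if (p : ℕ) + 1 = m then 1 else 0

def minMatrix (m : ℕ) : Matrix (Fin m) (Fin m) ℤ := of fun i j => min ((i : ℤ) + 1) ((j : ℤ) + 1)

end CartanA

open CartanA

theorem cartanA_mulVec_ramp (m : ℕ) : cartanA m *ᵥ ramp m = ((m : ℤ) + 1) • lastIndicator m := by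
  ext p
  have h := cartanA_mulVec_apply m (fun k => (k : ℤ)) p
  push_cast at h
  unfold ramp lastIndicator
  rw [h, Pi.smul_apply, ite_self, smul_ite, smul_eq_mul, mul_one, smul_zero]
  ring

theorem cartanA_mul_minMatrix (m : ℕ) :
    cartanA m * minMatrix m = 1 + vecMulVec (lastIndicator m) (ramp m) := by
  ext p i
  have h := cartanA_mulVec_apply m (fun k => min (k : ℤ) ((i : ℤ) + 1)) p
  push_cast at h
  simp only [mulVec, dotProduct] at h
  rw [mul_apply]
  simp only [minMatrix, of_apply, h, Matrix.add_apply, one_apply, vecMulVec_apply, lastIndicator,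
    ramp, Fin.ext_iff]
  have hp := p.isLt
  have hi := i.isLt
  split_ifs <;> omega

theorem ramp_dotProduct_cartanA_mulVec (m : ℕ) (v : Fin m → ℤ) :
    ramp m ⬝ᵥ (cartanA m *ᵥ v) = ((m : ℤ) + 1) * (lastIndicator m ⬝ᵥ v) := by
  rw [dotProduct_mulVec, ← mulVec_transpose, cartanA_transpose, cartanA_mulVec_ramp,
    smul_dotProduct, smul_eq_mul]

theorem exists_cartanA_mulVec_eq_iff (m : ℕ) (u : Fin m → ℤ) :
    (∃ v, cartanA m *ᵥ v = u) ↔ (m : ℤ) + 1 ∣ ramp m ⬝ᵥ u := by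
  constructor
  · rintro ⟨v, rfl⟩
    rw [ramp_dotProduct_cartanA_mulVec]
    exact dvd_mul_right _ _
  · rintro ⟨k, hk⟩
    refine ⟨minMatrix m *ᵥ u - k • ramp m, ?_⟩
    rw [mulVec_sub, mulVec_mulVec, cartanA_mul_minMatrix, add_mulVec, one_mulVec,
      vecMulVec_mulVec, op_smul_eq_smul, mulVec_smul, cartanA_mulVec_ramp, hk, smul_smul,
      mul_comm k, add_sub_cancel_right]

theorem index_range_cartanA (m : ℕ) (hm : 0 < m) :
    (LinearMap.range (mulVecLin (cartanA m))).toAddSubgroup.index = m + 1 := by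
  let φ : (Fin m → ℤ) →+ ZMod (m + 1) :=
    (Int.castAddHom _).comp (AddMonoidHom.mk' (ramp m ⬝ᵥ ·) (dotProduct_add _))
  have hker : (LinearMap.range (mulVecLin (cartanA m))).toAddSubgroup = φ.ker := by
    ext u
    simp [φ, exists_cartanA_mulVec_eq_iff, ZMod.intCast_zmod_eq_zero_iff_dvd]
  have hsurj : Function.Surjective φ := by
    intro c
    obtain ⟨z, rfl⟩ := ZMod.intCast_surjective c
    refine ⟨Pi.single ⟨0, hm⟩ z, ?_⟩
    simp [φ, dotProduct_single, ramp]
  rw [hker, AddSubgroup.index_ker, AddMonoidHom.range_eq_top.mpr hsurj, AddSubgroup.card_top,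
    Nat.card_zmod]

/-- The image of the linear map `ℤ^{n-1} → ℤ^{n-1}` given by the Cartan matrix
`C(A_{n-1})` equals the subgroup `{u : ∑ i·u_i ≡ 0 (mod n)}` (with `i` running
through `1, …, n-1`); in particular this image has index `n` in `ℤ^{n-1}`. -/
theorem cartanA_image (n : ℕ) (hn : 2 ≤ n) :
    (∀ u : Fin (n - 1) → ℤ,
      (∃ v : Fin (n - 1) → ℤ, (cartanA (n - 1)).mulVec v = u) ↔
        (n : ℤ) ∣ ∑ i : Fin (n - 1), ((i : ℕ) + 1 : ℤ) * u i) ∧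
    (Submodule.toAddSubgroup (LinearMap.range (Matrix.mulVecLin (cartanA (n - 1))))).index
      = n := by
  obtain ⟨m, rfl⟩ : ∃ m, n = m + 1 := ⟨n - 1, by omega⟩
  rw [Nat.add_sub_cancel]
  push_cast
  exact ⟨exists_cartanA_mulVec_eq_iff m, index_range_cartanA m (by omega)⟩
end

section
/- The determinant of the Jacobian matrix of the elementary symmetric polynomials e_1, …, e_n in variables x_1, …, x_n (the matrix with entries ∂e_i/∂x_j) equals, up to sign, the Vandermonde determinant ∏_{1 ≤ i < j ≤ n} (x_i − x_j). Consequently, the map 𝔸^n → 𝔸^n given by the elementary symmetric polynomials is étale at every point with pairwise distinct coordinates. -/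
/-!
Writing `x̂_j` for the variables other than `x_j`, `e_{k+1}(x) = e_{k+1}(x̂_j) + x_j e_k(x̂_j)`
and `∂/∂x_j` kills every polynomial in `x̂_j`, so `∂e_{k+1}/∂x_j = e_k(x̂_j)`; inverting the
same recursion gives `e_k(x̂_j) = ∑_{m ≤ k} (-x_j)^m e_{k-m}(x)`. Hence the Jacobian is `T · Vᵀ`
with `V` the Vandermonde matrix of the variables and `T` lower triangular with diagonal
entries `±1`.
-/

open MvPolynomial Finset

theorem Finset.val_map_eq_cons_map_erase {α β : Type*} [DecidableEq α] (f : α → β)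
    {s : Finset α} {a : α} (ha : a ∈ s) : s.val.map f = f a ::ₘ (s.erase a).val.map f := by
  rw [erase_val, ← Multiset.map_cons, Multiset.cons_erase ha]

namespace Multiset

variable {R : Type*}

theorem esymm_zero_right [CommSemiring R] (s : Multiset R) : s.esymm 0 = 1 := by
  simp [esymm]

theorem esymm_zero_left_succ [CommSemiring R] (k : ℕ) : (0 : Multiset R).esymm (k + 1) = 0 := by
  simp [esymm, powersetCard_zero_right]

theorem esymm_cons_succ [CommSemiring R] (a : R) (s : Multiset R) (k : ℕ) :
    (a ::ₘ s).esymm (k + 1) = s.esymm (k + 1) + a * s.esymm k := by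
  simp [esymm, sum_map_mul_left]

theorem esymm_eq_sum_range_esymm_cons [CommRing R] (a : R) (s : Multiset R) (k : ℕ) :
    s.esymm k = ∑ m ∈ Finset.range (k + 1), (-1) ^ m * a ^ m * (a ::ₘ s).esymm (k - m) := by
  induction k with
  | zero => simp [esymm_zero_right]
  | succ k ih =>
    have hshift : ∑ m ∈ Finset.range (k + 1),
        (-1) ^ (m + 1) * a ^ (m + 1) * (a ::ₘ s).esymm (k - m) = -a * s.esymm k := by
      rw [ih, Finset.mul_sum]
      exact Finset.sum_congr rfl fun m _ => by ring
    rw [Finset.sum_range_succ', Nat.sub_zero, esymm_cons_succ]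
    simp only [Nat.add_sub_add_right, hshift]
    ring

end Multiset

theorem Derivation.map_esymm_eq_zero {R A M : Type*} [CommSemiring R] [CommSemiring A]
    [Algebra R A] [AddCommMonoid M] [Module A M] [Module R M] (D : Derivation R A M)
    {s : Multiset A} (hs : ∀ a ∈ s, D a = 0) (k : ℕ) : D (s.esymm k) = 0 := by
  induction s using Multiset.induction_on generalizing k with
  | empty => cases k <;> simp [Multiset.esymm_zero_right, Multiset.esymm_zero_left_succ]
  | cons a s ih =>
    cases k with
    | zero => simp [Multiset.esymm_zero_right]
    | succ k =>
      have hs' : ∀ b ∈ s, D b = 0 := fun b hb => hs b (Multiset.mem_cons_of_mem hb)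
      rw [Multiset.esymm_cons_succ, map_add, D.leibniz, ih hs', ih hs',
        hs a (Multiset.mem_cons_self a s)]
      simp

namespace MvPolynomial

open scoped Matrix

theorem pderiv_esymm_succ {σ R : Type*} [Fintype σ] [DecidableEq σ] [CommSemiring R] (j : σ)
    (k : ℕ) : pderiv j (esymm σ R (k + 1)) = ((univ.erase j).val.map X).esymm k := by
  have hkill : ∀ p ∈ ((univ.erase j).val.map X : Multiset (MvPolynomial σ R)),
      pderiv j p = 0 := by
    simp only [Multiset.mem_map, mem_val, mem_erase]
    rintro _ ⟨l, ⟨hlj, -⟩, rfl⟩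
    exact pderiv_X_of_ne hlj
  rw [esymm_eq_multiset_esymm, univ.val_map_eq_cons_map_erase X (mem_univ j),
    Multiset.esymm_cons_succ, map_add, Derivation.leibniz, (pderiv j).map_esymm_eq_zero hkill,
    (pderiv j).map_esymm_eq_zero hkill, pderiv_X_self]
  simp

theorem pderiv_esymm_succ_eq_sum {σ R : Type*} [Fintype σ] [CommRing R] (j : σ) (k : ℕ) :
    pderiv j (esymm σ R (k + 1)) =
      ∑ m ∈ range (k + 1), (-1) ^ m * X j ^ m * esymm σ R (k - m) := by
  classical
  rw [pderiv_esymm_succ, Multiset.esymm_eq_sum_range_esymm_cons (X j),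
    ← univ.val_map_eq_cons_map_erase X (mem_univ j), ← esymm_eq_multiset_esymm]

variable (n : ℕ) (R : Type*) [CommRing R]

noncomputable def jacobianEsymm : Matrix (Fin n) (Fin n) (MvPolynomial (Fin n) R) :=
  Matrix.of fun i j => pderiv j (esymm (Fin n) R ((i : ℕ) + 1))

noncomputable def signedEsymmMatrix : Matrix (Fin n) (Fin n) (MvPolynomial (Fin n) R) :=
  Matrix.of fun i m => if m ≤ i then (-1) ^ (m : ℕ) * esymm (Fin n) R ((i : ℕ) - m) else 0

theorem jacobianEsymm_eq_mul_vandermonde :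
    jacobianEsymm n R = signedEsymmMatrix n R * (Matrix.vandermonde X)ᵀ := by
  ext i j : 1
  have hrange : (range n).filter (· ≤ (i : ℕ)) = range ((i : ℕ) + 1) := by
    ext m
    simp only [mem_filter, mem_range]
    omega
  rw [jacobianEsymm, Matrix.of_apply, pderiv_esymm_succ_eq_sum, ← hrange, sum_filter,
    ← Fin.sum_univ_eq_sum_range (fun m => if m ≤ (i : ℕ) then
      (-1) ^ m * X j ^ m * esymm (Fin n) R (i - m) else 0), Matrix.mul_apply]
  refine sum_congr rfl fun m _ => ?_
  simp only [signedEsymmMatrix, Matrix.of_apply, Matrix.transpose_apply, Matrix.vandermonde_apply,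
    Fin.val_fin_le]
  split_ifs <;> ring

theorem det_signedEsymmMatrix :
    (signedEsymmMatrix n R).det = (-1) ^ ∑ i : Fin n, (i : ℕ) := by
  rw [Matrix.det_of_isLowerTriangular]
  · simp [signedEsymmMatrix, esymm_zero, prod_pow_eq_pow_sum]
  · intro i m hmi
    simp [signedEsymmMatrix, not_le.2 (show i < m from hmi)]

end MvPolynomial

theorem Matrix.det_vandermonde_eq_neg_one_pow_mul_prod {n : ℕ} {R : Type*} [CommRing R]
    (v : Fin n → R) :
    (vandermonde v).det = (-1) ^ #(univ.filter fun p : Fin n × Fin n => p.1 < p.2) *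
      ∏ p ∈ univ.filter (fun p : Fin n × Fin n => p.1 < p.2), (v p.1 - v p.2) := by
  rw [det_vandermonde, mul_comm, prod_mul_pow_card,
    prod_finset_product' _ univ (fun i => Ioi i) (by simp) (f := fun i j => (v i - v j) * -1)]
  exact prod_congr rfl fun i _ => prod_congr rfl fun j _ => by ring

theorem MvPolynomial.det_jacobianEsymm (n : ℕ) (R : Type*) [CommRing R] :
    (jacobianEsymm n R).det =
      (-1) ^ (∑ i : Fin n, (i : ℕ) + #(univ.filter fun p : Fin n × Fin n => p.1 < p.2)) *
        ∏ p ∈ univ.filter (fun p : Fin n × Fin n => p.1 < p.2), (X p.1 - X p.2) := by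
  rw [jacobianEsymm_eq_mul_vandermonde, Matrix.det_mul, Matrix.det_transpose,
    det_signedEsymmMatrix, Matrix.det_vandermonde_eq_neg_one_pow_mul_prod, pow_add, mul_assoc]

/-- The determinant of the Jacobian matrix `(∂e_i/∂x_j)` of the elementary symmetric
polynomials `e_1, …, e_n` equals, up to sign, the Vandermonde determinant
`∏_{i<j} (x_i - x_j)`; consequently its evaluation at any point with pairwise distinct
coordinates is nonzero (so the map given by the `e_i` is étale there). -/
theorem jacobian_esymm_eq_vandermonde (K : Type*) [Field K] (n : ℕ) :
    (∃ s : ℤ, (s = 1 ∨ s = -1) ∧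
      (Matrix.of fun i j : Fin n =>
          MvPolynomial.pderiv j (esymm (Fin n) K ((i : ℕ) + 1))).det =
        s • ∏ p ∈ Finset.univ.filter (fun p : Fin n × Fin n => p.1 < p.2),
          (X p.1 - X p.2)) ∧
    ∀ x : Fin n → K, Function.Injective x →
      MvPolynomial.eval x
        (Matrix.of fun i j : Fin n =>
          MvPolynomial.pderiv j (esymm (Fin n) K ((i : ℕ) + 1))).det ≠ 0 := by
  obtain ⟨N, hdet⟩ : ∃ N : ℕ, (jacobianEsymm n K).det = (-1) ^ N * _ :=
    ⟨_, det_jacobianEsymm n K⟩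
  rw [jacobianEsymm] at hdet
  refine ⟨⟨(-1) ^ N, neg_one_pow_eq_or ℤ N, by simp [hdet, zsmul_eq_mul]⟩, fun x hx => ?_⟩
  rw [hdet, map_mul, map_pow, map_neg, map_one, map_prod]
  refine mul_ne_zero (pow_ne_zero _ (neg_ne_zero.2 one_ne_zero)) (prod_ne_zero_iff.2 fun p hp => ?_)
  rw [map_sub, eval_X, eval_X]
  exact sub_ne_zero.2 (hx.ne (mem_filter.1 hp).2.ne)
end

section
/- The permutohedron, i.e., the convex hull in ℝ^n of the n! points (σ(1), σ(2), …, σ(n)) for σ ∈ S_n, equals the Minkowski sum of the point (1,1,…,1) and the line segments conv{e_i, e_j} for all 1 ≤ i < j ≤ n, where e_1,…,e_n is the standard basis. -/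
/-!
Choosing `e_i` or `e_j` from each segment `[e_i, e_j]` is choosing the winner of the match
between `i` and `j`, so the vertex sums of the zonotope `∑_{i<j} [e_i, e_j]` are exactly the
score vectors of tournaments; the transitive tournaments have the permutations of
`(0, 1, …, n - 1)` as score vectors. It remains to put every score vector in the convex hull of
these. If `i` beats `j` and both have the same score, reversing that match, and then also
swapping the names of `i` and `j`, gives two tournaments whose score vectors average to the
original one and have a larger (bounded) value of `∑ₖ sₖ²`. So this ends at score vectors with
pairwise distinct entries in `{0, …, n - 1}`, which are permutations of `(0, 1, …, n - 1)`.
-/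

open Pointwise Finset

/-- `g a b` says that `a` beats `b`; the diagonal is irrelevant. -/
def IsTournament {α : Type*} (g : α → α → Bool) : Prop := ∀ a b, a ≠ b → (g a b ↔ ¬g b a)

namespace Tournament

variable {α : Type*} {g : α → α → Bool}

def relabel (g : α → α → Bool) (τ : Equiv.Perm α) : α → α → Bool := fun a b => g (τ a) (τ b)

lemma _root_.IsTournament.relabel (hg : IsTournament g) (τ : Equiv.Perm α) :
    IsTournament (relabel g τ) :=
  fun a b hab => hg (τ a) (τ b) (τ.injective.ne hab)

def ofRank {β : Type*} [LinearOrder β] (r : α → β) : α → α → Bool := fun a b => r b < r a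

lemma isTournament_ofRank {β : Type*} [LinearOrder β] {r : α → β} (hr : r.Injective) :
    IsTournament (ofRank r) := by
  intro a b hab
  simp only [ofRank, decide_eq_true_eq, not_lt]
  exact ⟨le_of_lt, fun h => lt_of_le_of_ne h (hr.ne hab).symm⟩

def ofUpper [LinearOrder α] (c : α → α → Bool) : α → α → Bool :=
  fun a b => if a < b then c a b else !c b a

lemma isTournament_ofUpper [LinearOrder α] (c : α → α → Bool) : IsTournament (ofUpper c) := by
  intro a b hab
  rcases lt_or_gt_of_ne hab with h | h <;> simp [ofUpper, h, not_lt_of_gt h]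

section Score

variable [DecidableEq α]

def reverse (g : α → α → Bool) (i j : α) : α → α → Bool :=
  fun a b => if (a = i ∧ b = j) ∨ (a = j ∧ b = i) then !g a b else g a b

lemma _root_.IsTournament.reverse (hg : IsTournament g) (i j : α) :
    IsTournament (reverse g i j) := by
  intro a b hab
  have hsym : (a = i ∧ b = j) ∨ (a = j ∧ b = i) ↔ (b = i ∧ a = j) ∨ (b = j ∧ a = i) := by
    tauto
  simp only [Tournament.reverse, hsym]
  split_ifs <;> simpa using hg a b hab

variable [Fintype α]

def score (g : α → α → Bool) (k : α) : ℕ := #{l | l ≠ k ∧ g k l}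

lemma score_lt_card (g : α → α → Bool) (k : α) : score g k < Fintype.card α :=
  card_lt_univ_of_notMem (x := k) (by simp)

lemma exists_equiv_of_score_injective (hinj : (score g).Injective) :
    ∃ e : α ≃ Fin (Fintype.card α), ∀ k, score g k = e k := by
  let r : α → Fin (Fintype.card α) := fun k => ⟨score g k, score_lt_card g k⟩
  have hr : r.Bijective := (Fintype.bijective_iff_injective_and_card r).2
    ⟨fun a b h => hinj (Fin.val_eq_of_eq h), by simp⟩
  exact ⟨Equiv.ofBijective r hr, fun k => rfl⟩

lemma score_ofRank {m : ℕ} (e : α ≃ Fin m) (k : α) : score (ofRank e) k = e k := by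
  rw [score, ← Fin.card_Iio (e k)]
  refine card_equiv e fun l => ?_
  rw [mem_filter, mem_Iio]
  simp only [ofRank, decide_eq_true_eq, mem_univ, true_and, and_iff_right_iff_imp]
  exact fun h => ne_of_apply_ne e h.ne

lemma score_relabel (g : α → α → Bool) (τ : Equiv.Perm α) (k : α) :
    score (relabel g τ) k = score g (τ k) := by
  rw [score, score]
  exact card_equiv τ fun l => by rw [mem_filter, mem_filter]; simp [relabel]

section Reverse

variable {i j : α}

lemma score_reverse_left (hij : i ≠ j) (hgij : g i j) :
    score (reverse g i j) i + 1 = score g i := by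
  have : ({l | l ≠ i ∧ reverse g i j i l} : Finset α) =
      ({l | l ≠ i ∧ g i l} : Finset α).erase j := by
    ext l
    simp only [reverse, mem_filter, mem_univ, true_and, mem_erase]
    grind
  rw [score, score, this, card_erase_add_one (by simp [hij.symm, hgij])]

lemma score_reverse_right (hg : IsTournament g) (hij : i ≠ j) (hgij : g i j) :
    score (reverse g i j) j = score g j + 1 := by
  have : ({l | l ≠ j ∧ reverse g i j j l} : Finset α) =
      insert i ({l | l ≠ j ∧ g j l} : Finset α) := by
    ext l
    simp only [reverse, mem_filter, mem_univ, true_and, mem_insert]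
    grind [hg i j hij]
  rw [score, score, this, card_insert_of_notMem (by simp [(hg i j hij).1 hgij])]

lemma score_reverse_of_ne {k : α} (hki : k ≠ i) (hkj : k ≠ j) :
    score (reverse g i j) k = score g k := by
  simp only [score, reverse, hki, hkj, false_and, or_self, if_false]

lemma sum_sq_score_reverse (hg : IsTournament g) (hij : i ≠ j) (hgij : g i j)
    (hs : score g i = score g j) :
    ∑ k, score (reverse g i j) k ^ 2 = ∑ k, score g k ^ 2 + 2 := by
  have hi := score_reverse_left hij hgij
  have hj := score_reverse_right hg hij hgij
  have key : ∑ k, ((score (reverse g i j) k : ℤ) ^ 2 - (score g k : ℤ) ^ 2) = 2 := by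
    rw [Fintype.sum_eq_add i j hij fun k hk => by rw [score_reverse_of_ne hk.1 hk.2, sub_self],
      ← hi, hj, ← hs, ← hi]
    push_cast
    ring
  rw [sum_sub_distrib] at key
  zify
  linarith

end Reverse

lemma sum_sq_score_lt_card_pow [Nonempty α] (g : α → α → Bool) :
    ∑ k, score g k ^ 2 < Fintype.card α ^ 3 := calc
  ∑ k, score g k ^ 2 < ∑ _k : α, Fintype.card α ^ 2 :=
    sum_lt_sum_of_nonempty univ_nonempty fun k _ =>
      Nat.pow_lt_pow_left (score_lt_card g k) two_ne_zero
  _ = Fintype.card α ^ 3 := by simp [card_univ]; ring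

def scoreVec (R : Type*) [NatCast R] (g : α → α → Bool) : α → R := fun k => score g k

theorem scoreVec_mem_convexHull (𝕜 : Type*) [Field 𝕜] [LinearOrder 𝕜] [IsStrictOrderedRing 𝕜]
    (g : α → α → Bool) (hg : IsTournament g) :
    scoreVec 𝕜 g ∈ convexHull 𝕜 (scoreVec 𝕜 '' {g | IsTournament g ∧ (score g).Injective}) := by
  by_cases hinj : (score g).Injective
  · exact subset_convexHull 𝕜 _ ⟨g, ⟨hg, hinj⟩, rfl⟩
  obtain ⟨i, j, hij, hs, hgij⟩ : ∃ i j, i ≠ j ∧ score g i = score g j ∧ g i j := by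
    obtain ⟨a, b, hsab, hab⟩ := Function.not_injective_iff.1 hinj
    by_cases hgab : g a b
    · exact ⟨a, b, hab, hsab, hgab⟩
    · exact ⟨b, a, hab.symm, hsab.symm, (hg b a hab.symm).2 hgab⟩
  have : Nonempty α := ⟨i⟩
  have hΦ := sum_sq_score_lt_card_pow g
  set g₁ := reverse g i j
  set g₂ := relabel g₁ (Equiv.swap i j)
  have hΦ₁ : ∑ k, score g₁ k ^ 2 = ∑ k, score g k ^ 2 + 2 := sum_sq_score_reverse hg hij hgij hs
  have hΦ₂ : ∑ k, score g₂ k ^ 2 = ∑ k, score g₁ k ^ 2 := by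
    simp only [g₂, score_relabel]
    exact Equiv.sum_comp (Equiv.swap i j) (fun k => score g₁ k ^ 2)
  have h₁ := scoreVec_mem_convexHull 𝕜 g₁ (hg.reverse i j)
  have h₂ := scoreVec_mem_convexHull 𝕜 g₂ ((hg.reverse i j).relabel _)
  have hi : (score g₁ i : 𝕜) = score g i - 1 := by
    rw [← score_reverse_left hij hgij]; push_cast; ring
  have hj : (score g₁ j : 𝕜) = score g i + 1 := by
    rw [score_reverse_right hg hij hgij, hs]; push_cast; ring
  convert convex_convexHull 𝕜 _ h₁ h₂ (by norm_num : (0 : 𝕜) ≤ 1 / 2)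
    (by norm_num : (0 : 𝕜) ≤ 1 / 2) (by norm_num) using 1
  funext k
  simp only [scoreVec, g₂, score_relabel, Pi.add_apply, Pi.smul_apply, smul_eq_mul]
  rcases eq_or_ne k i with rfl | hki
  · rw [Equiv.swap_apply_left, hi, hj]; ring
  rcases eq_or_ne k j with rfl | hkj
  · rw [Equiv.swap_apply_right, hi, hj, hs]; ring
  · rw [Equiv.swap_apply_of_ne_of_ne hki hkj, score_reverse_of_ne hki hkj]; ring
termination_by Fintype.card α ^ 3 - ∑ k, score g k ^ 2
decreasing_by all_goals simp only [g₁, g₂] at *; omega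

end Score

section Winner

variable [Fintype α] [LinearOrder α]

def winner (g : α → α → Bool) (p : α × α) : α := if g p.1 p.2 then p.1 else p.2

lemma card_filter_winner_eq_score (hg : IsTournament g) (k : α) :
    #{p : α × α | p.1 < p.2 ∧ winner g p = k} = score g k := by
  refine card_nbij' (fun p => if p.1 = k then p.2 else p.1)
    (fun l => if k < l then (k, l) else (l, k)) ?_ ?_ ?_ ?_ <;>
  · intro x hx
    simp only [coe_filter, mem_univ, true_and, Set.mem_ofPred_eq, winner] at hx ⊢
    grind [IsTournament]

variable (R : Type*) [AddCommMonoidWithOne R]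

lemma sum_single_winner (hg : IsTournament g) :
    ∑ p ∈ univ.filter (fun p : α × α => p.1 < p.2), Pi.single (winner g p) (1 : R) =
      scoreVec R g := by
  funext k
  simp only [Finset.sum_apply, Pi.single_apply, sum_boole, filter_filter, eq_comm (a := k),
    card_filter_winner_eq_score hg, scoreVec]

lemma sum_pair_eq_image_scoreVec :
    ∑ p ∈ univ.filter (fun p : α × α => p.1 < p.2),
        ({Pi.single p.1 1, Pi.single p.2 1} : Set (α → R)) =
      scoreVec R '' {g | IsTournament g} := by
  classical
  refine Set.Subset.antisymm ?_ ?_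
  · intro x hx
    obtain ⟨f, hf, rfl⟩ := (Set.mem_finsetSum _ _ _).1 hx
    refine ⟨_, isTournament_ofUpper fun a b => decide (f (a, b) = Pi.single a 1), ?_⟩
    rw [← sum_single_winner R (isTournament_ofUpper _)]
    refine sum_congr rfl fun p hp => ?_
    have hp' : p.1 < p.2 := (mem_filter.1 hp).2
    by_cases h : f p = Pi.single p.1 1
    · simp [winner, ofUpper, hp', h]
    · simpa [winner, ofUpper, hp', h] using ((hf hp).resolve_left h).symm
  · rintro _ ⟨g, hg, rfl⟩
    rw [← sum_single_winner R hg]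
    refine Set.finsetSum_mem_finsetSum _ _ _ fun p _ => ?_
    unfold winner
    split_ifs <;> simp

end Winner

end Tournament

open Tournament

lemma setOf_perm_eq_image_scoreVec (R : Type*) [AddMonoidWithOne R] (n : ℕ) :
    {x : Fin n → R | ∃ σ : Equiv.Perm (Fin n), ∀ i, x i = (σ i : ℕ)} =
      scoreVec R '' {g | IsTournament g ∧ (score g).Injective} := by
  ext x
  constructor
  · rintro ⟨σ, hσ⟩
    refine ⟨ofRank σ, ⟨isTournament_ofRank σ.injective, ?_⟩, funext fun i => ?_⟩
    · exact fun a b h => σ.injective (Fin.ext (by simpa [score_ofRank] using h))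
    · simp [scoreVec, score_ofRank, hσ]
  · rintro ⟨g, ⟨-, hinj⟩, rfl⟩
    obtain ⟨e, he⟩ := exists_equiv_of_score_injective hinj
    exact ⟨e.trans (finCongr (Fintype.card_fin n)), fun i => by simp [scoreVec, he]⟩

theorem convexHull_setOf_perm_eq_sum_segment (𝕜 : Type*) [Field 𝕜] [LinearOrder 𝕜]
    [IsStrictOrderedRing 𝕜] (n : ℕ) :
    convexHull 𝕜 {x : Fin n → 𝕜 | ∃ σ : Equiv.Perm (Fin n), ∀ i, x i = (σ i : ℕ)} =
      ∑ p ∈ univ.filter (fun p : Fin n × Fin n => p.1 < p.2),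
        segment 𝕜 (Pi.single p.1 1) (Pi.single p.2 1) := by
  simp_rw [← convexHull_pair]
  rw [← convexHull_sum, sum_pair_eq_image_scoreVec, setOf_perm_eq_image_scoreVec]
  refine (convexHull_mono (Set.image_mono fun g hg => hg.1)).antisymm ?_
  refine convexHull_min ?_ (convex_convexHull 𝕜 _)
  rintro _ ⟨g, hg, rfl⟩
  exact scoreVec_mem_convexHull 𝕜 g hg

/-- The permutohedron, the convex hull in `ℝ^n` of the points `(σ(1), …, σ(n))` for
`σ ∈ S_n` (values `1, …, n`), equals the Minkowski sum of the point `(1, …, 1)` and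
the line segments `conv{e_i, e_j}` for all `i < j`. -/
theorem permutohedron_eq_sum_segments (n : ℕ) :
    convexHull ℝ {x : Fin n → ℝ | ∃ σ : Equiv.Perm (Fin n), ∀ i, x i = (σ i : ℕ) + 1} =
      {fun _ => (1 : ℝ)} +
        ∑ p ∈ Finset.univ.filter (fun p : Fin n × Fin n => p.1 < p.2),
          segment ℝ (Pi.single p.1 (1 : ℝ)) (Pi.single p.2 (1 : ℝ)) := by
  have hshift : {x : Fin n → ℝ | ∃ σ : Equiv.Perm (Fin n), ∀ i, x i = (σ i : ℕ) + 1} =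
      {fun _ => 1} + {x : Fin n → ℝ | ∃ σ : Equiv.Perm (Fin n), ∀ i, x i = (σ i : ℕ)} := by
    ext x
    simp only [Set.singleton_add, Set.mem_image, Set.mem_ofPred_eq]
    constructor
    · rintro ⟨σ, hσ⟩
      exact ⟨fun i => σ i, ⟨σ, fun _ => rfl⟩, funext fun i => by simp [hσ, add_comm]⟩
    · rintro ⟨y, ⟨σ, hσ⟩, rfl⟩
      exact ⟨σ, fun i => by simp [hσ, add_comm]⟩
  rw [hshift, convexHull_add, convexHull_singleton, convexHull_setOf_perm_eq_sum_segment]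
end

section
/- The convex hull in ℝ^n of the n! points (σ(1)−1, σ(2)−1, …, σ(n)−1) for σ ∈ S_n equals the Minkowski sum ∑_{j=1}^{n−1} Δ_{j,n} of the hypersimplices Δ_{j,n} = conv{χ_J : J ⊆ {1,…,n}, |J| = j}, where χ_J ∈ {0,1}^n is the characteristic vector of J. -/
/-!
A permutation point `(σ(i) - 1)_i` is the sum over `j = 1, …, n - 1` of the characteristic
vectors of the sets `{i | σ(i) > n - j}`, which have `j` elements; this gives one inclusion.
Conversely, a linear functional `x ↦ ∑ wᵢ xᵢ` is maximised on the vertices of `Δ_{j,n}` by the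
`j` coordinates of largest weight. Ordering the coordinates by weight produces a single
permutation whose staircase decomposition picks these maximisers for all `j` at once, so every
linear functional is bounded on the Minkowski sum by its maximum on the permutation points, and
the Hahn–Banach separation theorem gives the other inclusion.
-/

open Pointwise Finset

/-- The `j`-th hypersimplex in `ℝ^n`: the convex hull of the characteristic vectors of
the `j`-element subsets of `{1, …, n}`. -/
def hypersimplex (n j : ℕ) : Set (Fin n → ℝ) :=
  convexHull ℝ {x | ∃ J : Finset (Fin n), J.card = j ∧ ∀ i, x i = if i ∈ J then 1 else 0}

theorem Finset.sum_le_sum_of_card_eq_of_separated {ι M : Type*} [DecidableEq ι]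
    [AddCommMonoid M] [LinearOrder M] [IsOrderedCancelAddMonoid M] {s t : Finset ι}
    {w : ι → M} (θ : M) (hcard : #s = #t) (hout : ∀ a ∉ t, w a ≤ θ) (hin : ∀ b ∈ t, θ ≤ w b) :
    ∑ a ∈ s, w a ≤ ∑ b ∈ t, w b :=
  calc ∑ a ∈ s, w a = ∑ a ∈ s ∩ t, w a + ∑ a ∈ s \ t, w a := (sum_inter_add_sum_sdiff ..).symm
    _ ≤ ∑ a ∈ t ∩ s, w a + #(t \ s) • θ := by
      rw [inter_comm, ← card_sdiff_comm hcard]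
      gcongr
      exact sum_le_card_nsmul _ _ _ fun a ha => hout a (mem_sdiff.1 ha).2
    _ ≤ ∑ b ∈ t ∩ s, w b + ∑ b ∈ t \ s, w b := by
      gcongr
      exact card_nsmul_le_sum _ _ _ fun b hb => hin b (mem_sdiff.1 hb).1
    _ = ∑ b ∈ t, w b := sum_inter_add_sum_sdiff ..

section charVec

variable {ι : Type*} [DecidableEq ι]

def charVec (J : Finset ι) : ι → ℝ := fun i => if i ∈ J then 1 else 0

theorem charVec_eq_sum_single (J : Finset ι) : charVec J = ∑ i ∈ J, Pi.single i 1 := by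
  ext a
  simp [charVec, Finset.sum_apply]

theorem map_charVec {F : Type*} [FunLike F (ι → ℝ) ℝ] [AddMonoidHomClass F (ι → ℝ) ℝ] (l : F)
    (J : Finset ι) : l (charVec J) = ∑ i ∈ J, l (Pi.single i 1) := by
  rw [charVec_eq_sum_single, map_sum]

end charVec

theorem hypersimplex_eq_convexHull_image (n j : ℕ) :
    hypersimplex n j = convexHull ℝ (charVec '' {J : Finset (Fin n) | #J = j}) := by
  simp only [hypersimplex, Set.image, Set.mem_ofPred_eq, funext_iff, charVec,
    eq_comm (a := charVec _)]

section permutation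

variable {n : ℕ}

def permVec (σ : Equiv.Perm (Fin n)) : Fin n → ℝ := fun i => ((σ i : ℕ) : ℝ)

def topSet (σ : Equiv.Perm (Fin n)) (j : ℕ) : Finset (Fin n) := {i | n - j ≤ (σ i : ℕ)}

theorem card_topSet (σ : Equiv.Perm (Fin n)) {j : ℕ} (hj : j ≤ n) : #(topSet σ j) = j := by
  rw [topSet, card_filter, Equiv.sum_comp σ (fun k : Fin n => if n - j ≤ (k : ℕ) then 1 else 0),
    Fin.sum_univ_eq_sum_range (fun k => if n - j ≤ k then 1 else 0), ← card_filter,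
    show {k ∈ range n | n - j ≤ k} = Ico (n - j) n by ext; simp; omega, Nat.card_Ico]
  omega

theorem sum_charVec_topSet (σ : Equiv.Perm (Fin n)) :
    ∑ j ∈ Icc 1 (n - 1), charVec (topSet σ j) = permVec σ := by
  ext i
  have hσi := (σ i).isLt
  simp only [Finset.sum_apply, charVec, topSet, mem_filter_univ, sum_boole, permVec]
  rw [show {j ∈ Icc 1 (n - 1) | n - j ≤ (σ i : ℕ)} = Icc (n - σ i) (n - 1) by ext; simp; omega,
    Nat.card_Icc]
  congr 1
  omega

theorem sum_le_sum_topSet {σ : Equiv.Perm (Fin n)} {w : Fin n → ℝ} (hw : Monotone (w ∘ σ.symm))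
    {J : Finset (Fin n)} (hJ₀ : 0 < #J) (hJn : #J ≤ n) :
    ∑ i ∈ J, w i ≤ ∑ i ∈ topSet σ #J, w i := by
  set p : Fin n := ⟨n - #J, by omega⟩
  refine sum_le_sum_of_card_eq_of_separated (w (σ.symm p)) (card_topSet σ hJn).symm
    (fun a ha => ?_) (fun b hb => ?_)
  · simp only [topSet, mem_filter_univ, not_le] at ha
    simpa using hw (show σ a ≤ p from Fin.le_def.2 (by simp only [p]; omega))
  · simp only [topSet, mem_filter_univ] at hb
    simpa using hw (show p ≤ σ b from hb)

theorem exists_perm_le_of_mem_sum {F : Type*} [FunLike F (Fin n → ℝ) ℝ]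
    [AddMonoidHomClass F (Fin n → ℝ) ℝ] (l : F) {y : Fin n → ℝ}
    (hy : y ∈ ∑ j ∈ Icc 1 (n - 1), charVec '' {J : Finset (Fin n) | #J = j}) :
    ∃ σ : Equiv.Perm (Fin n), l y ≤ l (permVec σ) := by
  obtain ⟨f, hf, rfl⟩ := (Set.mem_finsetSum _ _ _).1 hy
  choose! J hJ hfJ using fun j (hj : j ∈ Icc 1 (n - 1)) => hf hj
  set w : Fin n → ℝ := fun i => l (Pi.single i 1)
  refine ⟨(Tuple.sort w).symm, ?_⟩
  rw [← sum_charVec_topSet, map_sum, map_sum]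
  refine sum_le_sum fun j hj => ?_
  have hcard : #(J j) = j := hJ j hj
  have hj' := mem_Icc.1 hj
  rw [← hfJ j hj, map_charVec, map_charVec]
  simpa only [hcard] using sum_le_sum_topSet (σ := (Tuple.sort w).symm)
    (Tuple.monotone_sort w) (J := J j) (by omega) (by omega)

end permutation

theorem permutohedron_eq_sum_hypersimplices_general (n : ℕ) :
    convexHull ℝ {x : Fin n → ℝ | ∃ σ : Equiv.Perm (Fin n), ∀ i, x i = ((σ i : ℕ) : ℝ)} =
      ∑ j ∈ Finset.Icc 1 (n - 1), hypersimplex n j := by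
  have hP : {x : Fin n → ℝ | ∃ σ : Equiv.Perm (Fin n), ∀ i, x i = ((σ i : ℕ) : ℝ)} =
      Set.range permVec := by
    ext x
    simp only [Set.mem_range, funext_iff, permVec, Set.mem_ofPred_eq, eq_comm (a := x _)]
  simp only [hP, hypersimplex_eq_convexHull_image, ← convexHull_sum]
  refine (convexHull_mono ?_).antisymm (convexHull_min ?_ (convex_convexHull ℝ _))
  · rintro _ ⟨σ, rfl⟩
    rw [← sum_charVec_topSet σ]
    exact Set.finsetSum_mem_finsetSum _ _ _ fun j hj =>
      ⟨_, card_topSet σ (by have := mem_Icc.1 hj; omega), rfl⟩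
  · intro y hy
    rw [← iInter_halfSpaces_eq (convex_convexHull ℝ _) ((Set.finite_range _).isClosed_convexHull ℝ)]
    refine Set.mem_iInter.2 fun l => ?_
    obtain ⟨σ, hσ⟩ := exists_perm_le_of_mem_sum l hy
    exact ⟨_, subset_convexHull ℝ _ ⟨σ, rfl⟩, hσ⟩

/-- The convex hull of the points `(σ(1)-1, …, σ(n)-1)` for `σ ∈ S_n` (values
`0, …, n-1`) equals the Minkowski sum `∑_{j=1}^{n-1} Δ_{j,n}` of the hypersimplices. -/
theorem permutohedron_eq_sum_hypersimplices (n : ℕ) (hn : 1 ≤ n) :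
    convexHull ℝ {x : Fin n → ℝ | ∃ σ : Equiv.Perm (Fin n), ∀ i, x i = ((σ i : ℕ) : ℝ)} =
      ∑ j ∈ Finset.Icc 1 (n - 1), hypersimplex n j :=
  permutohedron_eq_sum_hypersimplices_general n
end

section
/- Every point (σ(1), …, σ(n)) with σ ∈ S_n is an extreme point (vertex) of the permutohedron conv{(τ(1), …, τ(n)) : τ ∈ S_n} ⊂ ℝ^n; hence the permutohedron has exactly n! vertices. -/
/-!
Permuting coordinates preserves `v ⬝ᵥ v`, so all points `v ∘ σ` lie on one level set of the
strictly convex function `v ↦ v ⬝ᵥ v`. By the maximum principle this level is the maximum of the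
function on their convex hull, and a strictly convex function cannot attain its maximum inside an
open segment, so every `v ∘ σ` is an extreme point. For injective `v` the map `σ ↦ v ∘ σ` is
injective, which gives `n!` vertices.
-/

open Set

section StrictConvex

variable {𝕜 E β : Type*} [Field 𝕜] [LinearOrder 𝕜] [IsStrictOrderedRing 𝕜]
  [AddCommGroup E] [Module 𝕜 E] [AddCommGroup β] [LinearOrder β] [IsOrderedAddMonoid β]
  [Module 𝕜 β] [IsStrictOrderedModule 𝕜 β] {C S : Set E} {f : E → β} {x : E}

lemma StrictConvexOn.mem_extremePoints_of_isMaxOn (hf : StrictConvexOn 𝕜 C f) (hx : x ∈ C)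
    (hmax : IsMaxOn f C x) : x ∈ C.extremePoints 𝕜 := by
  refine mem_extremePoints_iff_left.2 ⟨hx, fun y hy z hz hxyz => ?_⟩
  obtain rfl | hyz := eq_or_ne y z
  · rw [openSegment_same] at hxyz
    exact hxyz.symm
  obtain ⟨a, b, ha, hb, hab, rfl⟩ := hxyz
  refine absurd (hf.2 hy hz hyz ha hb hab) (not_lt.2 ?_)
  calc a • f y + b • f z ≤ a • f (a • y + b • z) + b • f (a • y + b • z) := by
        gcongr
        exacts [hmax hy, hmax hz]
    _ = f (a • y + b • z) := by rw [← add_smul, hab, one_smul]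

theorem StrictConvexOn.extremePoints_convexHull_eq (hf : StrictConvexOn 𝕜 (convexHull 𝕜 S) f)
    {c : β} (hS : ∀ y ∈ S, f y = c) : (convexHull 𝕜 S).extremePoints 𝕜 = S := by
  refine extremePoints_convexHull_subset.antisymm fun x hx => ?_
  refine hf.mem_extremePoints_of_isMaxOn (subset_convexHull 𝕜 S hx) fun y hy => ?_
  obtain ⟨z, hz, hyz⟩ := hf.convexOn.exists_ge_of_mem_convexHull (subset_convexHull 𝕜 S) hy
  exact hyz.trans_eq ((hS z hz).trans (hS x hx).symm)

end StrictConvex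

lemma strictConvexOn_dotProduct_self {𝕜 ι : Type*} [Field 𝕜] [LinearOrder 𝕜]
    [IsStrictOrderedRing 𝕜] [Fintype ι] :
    StrictConvexOn 𝕜 univ fun v : ι → 𝕜 => v ⬝ᵥ v := by
  refine ⟨convex_univ, fun x _ y _ hxy a b ha hb hab => ?_⟩
  have hpos : 0 < (x - y) ⬝ᵥ (x - y) :=
    (Finset.sum_nonneg fun i _ => mul_self_nonneg _).lt_of_ne'
      (dotProduct_self_eq_zero.not.2 (sub_ne_zero.2 hxy))
  have hgap : a * (x ⬝ᵥ x) + b * (y ⬝ᵥ y) - (a • x + b • y) ⬝ᵥ (a • x + b • y)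
      = a * b * ((x - y) ⬝ᵥ (x - y)) := by
    obtain rfl := eq_sub_of_add_eq' hab
    simp only [dotProduct, Finset.mul_sum, ← Finset.sum_add_distrib,
      ← Finset.sum_sub_distrib]
    refine Finset.sum_congr rfl fun i _ => ?_
    simp only [Pi.add_apply, Pi.smul_apply, Pi.sub_apply, smul_eq_mul]
    ring
  simp only [smul_eq_mul]
  linarith [mul_pos (mul_pos ha hb) hpos]

theorem extremePoints_convexHull_range_comp_perm {𝕜 ι : Type*} [Field 𝕜] [LinearOrder 𝕜]
    [IsStrictOrderedRing 𝕜] [Fintype ι] (v : ι → 𝕜) :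
    (convexHull 𝕜 (range fun σ : Equiv.Perm ι => v ∘ σ)).extremePoints 𝕜 =
      range fun σ : Equiv.Perm ι => v ∘ σ := by
  refine (strictConvexOn_dotProduct_self.subset (subset_univ _)
    (convex_convexHull 𝕜 _)).extremePoints_convexHull_eq (c := v ⬝ᵥ v) ?_
  rintro _ ⟨σ, rfl⟩
  exact comp_equiv_dotProduct_comp_equiv v v σ

/-- Every point `(σ(1), …, σ(n))` with `σ ∈ S_n` is an extreme point of the
permutohedron `conv{(τ(1), …, τ(n)) : τ ∈ S_n}`; hence the permutohedron has exactly
`n!` vertices. -/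
theorem permutohedron_extremePoints (n : ℕ) :
    (∀ σ : Equiv.Perm (Fin n),
      (fun i => ((σ i : ℕ) : ℝ) + 1) ∈
        Set.extremePoints ℝ (convexHull ℝ
          {x : Fin n → ℝ | ∃ τ : Equiv.Perm (Fin n), ∀ i, x i = (τ i : ℕ) + 1})) ∧
    Nat.card (Set.extremePoints ℝ (convexHull ℝ
        {x : Fin n → ℝ | ∃ τ : Equiv.Perm (Fin n), ∀ i, x i = (τ i : ℕ) + 1}))
      = n.factorial := by
  set v : Fin n → ℝ := fun i => (i : ℕ) + 1
  have hinj : Function.Injective fun τ : Equiv.Perm (Fin n) => v ∘ τ := fun σ τ h =>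
    Equiv.ext fun i => Fin.ext <| by simpa [v] using congrFun h i
  have hS : {x : Fin n → ℝ | ∃ τ : Equiv.Perm (Fin n), ∀ i, x i = (τ i : ℕ) + 1} =
      range fun τ : Equiv.Perm (Fin n) => v ∘ τ := by
    ext x
    simp only [mem_ofPred_eq, mem_range, funext_iff, eq_comm, Function.comp_apply, v]
  rw [hS, extremePoints_convexHull_range_comp_perm]
  refine ⟨fun σ => ⟨σ, rfl⟩, ?_⟩
  rw [Nat.card_range_of_injective hinj, Nat.card_perm,
    Nat.card_eq_fintype_card, Fintype.card_fin]
end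

section
/- For any permutation σ ∈ S_n, the images of the vectors e_{σ(1)}, e_{σ(1)}+e_{σ(2)}, …, e_{σ(1)}+⋯+e_{σ(n−1)} in the quotient lattice ℤ^n / ℤ·(1,1,…,1) form a ℤ-basis of that quotient. -/
/-!
The partial sums of a basis form a basis, because their coordinate matrix is unitriangular. For
the standard basis permuted by `σ`, the last partial sum is the all-ones vector, and dividing a
free module by the span of one basis vector leaves the images of the other basis vectors as a
basis of the quotient.
-/

open Finset Submodule

theorem Fin.isCompl_range_castSucc_last (n : ℕ) :
    IsCompl (Set.range (Fin.castSucc : Fin n → Fin (n + 1))) {Fin.last n} := by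
  have : Set.range (Fin.castSucc : Fin n → Fin (n + 1)) = {Fin.last n}ᶜ := by
    ext i
    simp only [Set.mem_range, Fin.exists_castSucc_eq, Set.mem_compl_singleton_iff]
  rw [this]
  exact isCompl_compl.symm

namespace Module.Basis

variable {R M : Type*}

section Quotient

variable [Ring R] [AddCommGroup M] [Module R M] {n : ℕ}

theorem isCompl_span_range_castSucc_span_last (b : Basis (Fin (n + 1)) R M) :
    IsCompl (span R (Set.range (b ∘ Fin.castSucc))) (span R {b (Fin.last n)}) := by
  rw [Set.range_comp, ← Set.image_singleton]
  exact b.linearIndependent.isCompl_span_image b.span_eq (Fin.isCompl_range_castSucc_last n)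

noncomputable def quotientSpanLast (b : Basis (Fin (n + 1)) R M) :
    Basis (Fin n) R (M ⧸ span R {b (Fin.last n)}) :=
  have h := b.isCompl_span_range_castSucc_span_last
  .mk ((b.linearIndependent.comp _ (Fin.castSucc_injective n)).map
      (by rw [ker_mkQ]; exact h.disjoint))
    (by rw [Set.range_comp, span_image, top_le_iff, map_mkQ_eq_top]; exact h.codisjoint.symm.eq_top)

@[simp]
theorem quotientSpanLast_apply (b : Basis (Fin (n + 1)) R M) (k : Fin n) :
    b.quotientSpanLast k = Submodule.Quotient.mk (b k.castSucc) := by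
  simp [quotientSpanLast]

end Quotient

section PartialSums

variable [CommRing R] [AddCommGroup M] [Module R M] {n : ℕ}

theorem isUnit_det_partialSums (b : Basis (Fin n) R M) :
    IsUnit (b.det fun k => ∑ j ∈ Iic k, b j) := by
  have hM : b.toMatrix (fun k => ∑ j ∈ Iic k, b j) = .of fun i k => if i ≤ k then 1 else 0 := by
    ext i k
    simp [toMatrix_apply, map_sum, Finsupp.single_apply]
  rw [det_apply, hM, Matrix.det_of_isUpperTriangular]
  · simp
  · intro i k hki
    exact if_neg (not_le.mpr hki)

noncomputable def partialSums (b : Basis (Fin n) R M) : Basis (Fin n) R M :=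
  have h := (b.is_basis_iff_det).mpr b.isUnit_det_partialSums
  .mk h.1 h.2.ge

@[simp]
theorem partialSums_apply (b : Basis (Fin n) R M) (k : Fin n) :
    b.partialSums k = ∑ j ∈ Iic k, b j := by
  simp [partialSums]

end PartialSums

end Module.Basis

/-- For any permutation `σ ∈ S_n`, the images of the partial sums
`e_{σ(1)}, e_{σ(1)}+e_{σ(2)}, …, e_{σ(1)}+⋯+e_{σ(n-1)}` in the quotient lattice
`ℤ^n / ℤ·(1,…,1)` form a `ℤ`-basis of that quotient. -/
theorem partial_sums_basis_of_quotient (n : ℕ) (hn : 1 ≤ n) (σ : Equiv.Perm (Fin n)) :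
    ∃ B : Module.Basis (Fin (n - 1)) ℤ
        ((Fin n → ℤ) ⧸ Submodule.span ℤ ({fun _ => 1} : Set (Fin n → ℤ))),
      ∀ k : Fin (n - 1),
        B k = Submodule.Quotient.mk
          (∑ j ∈ Finset.univ.filter (fun j : Fin n => (j : ℕ) ≤ (k : ℕ)),
            Pi.single (σ j) (1 : ℤ)) := by
  obtain ⟨m, rfl⟩ := Nat.exists_eq_add_of_le' hn
  let b := ((Pi.basisFun ℤ (Fin (m + 1))).reindex σ.symm).partialSums
  have hb : ∀ k, b k = ∑ j ∈ Iic k, Pi.single (σ j) 1 := by simp [b]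
  have hlast : b (Fin.last m) = fun _ => 1 := by
    rw [hb, ← Fin.top_eq_last, Iic_top, Equiv.sum_comp σ (fun i => Pi.single i (1 : ℤ))]
    ext i
    simp
  rw [← hlast]
  refine ⟨b.quotientSpanLast, fun k => ?_⟩
  rw [b.quotientSpanLast_apply, hb k.castSucc]
  congr 2
  ext j
  simp [Fin.le_def]
end

section
/- For every subset I ⊆ {1,…,n}, the n vectors in ℚ^n consisting of the columns −c_i of the negative Cartan matrix −C(A_n) for i ∉ I together with the standard basis vectors e_i for i ∈ I are linearly independent over ℚ. Hence each cone σ_I of the fan Υ(A_n) is simplicial of full dimension n. -/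
/-!
If `∑ gᵢ vᵢ = 0`, split `g` into its part `a` supported off `I` and its part `b` supported on
`I`; the relation says exactly `C a = b`. As `a` and `b` have disjoint supports,
`aᵀ C a = a ⬝ b = 0`, so positive definiteness of `C` forces `a = 0`, and then `b = C a = 0`.

`C(A_n)` is positive definite because it is the Gram matrix `BᵀB` of the simple roots
`εᵢ - εᵢ₊₁ ∈ ℚⁿ⁺¹`, and `B` is injective: taking prefix sums is a left inverse.
-/

/-- The Cartan matrix of the root system `A_n`, with rational entries. -/
def cartanAQ (n : ℕ) : Matrix (Fin n) (Fin n) ℚ :=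
  Matrix.of fun i j => if i = j then 2 else if (i : ℕ) + 1 = j ∨ (j : ℕ) + 1 = i then -1 else 0

open Matrix

theorem Matrix.PosDef.linearIndependent_ite_single_neg_col {ι R : Type*} [Fintype ι]
    [DecidableEq ι] [CommRing R] [PartialOrder R] [StarRing R] {A : Matrix ι ι R}
    (hA : A.PosDef) (I : Finset ι) :
    LinearIndependent R (fun i => if i ∈ I then (Pi.single i 1 : ι → R) else fun j => -A j i) := by
  rw [Fintype.linearIndependent_iff]
  intro g hg
  set a : ι → R := fun i => if i ∈ I then 0 else g i
  set b : ι → R := fun i => if i ∈ I then g i else 0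
  have hterm : ∀ i, (g i • if i ∈ I then (Pi.single i 1 : ι → R) else fun j => -A j i) =
      Pi.single i (b i) - fun j => A j i * a i := by
    intro i
    ext j
    by_cases hi : i ∈ I
    · simp [a, b, hi, Pi.single_apply]
    · simp [a, b, hi, mul_comm]
  have hAa : A *ᵥ a = b := by
    simp only [hterm, Finset.sum_sub_distrib, Finset.univ_sum_single] at hg
    rw [eq_comm, ← sub_eq_zero, ← hg]
    ext j
    simp [mulVec, dotProduct, Finset.sum_apply]
  have ha : a = 0 := by
    by_contra h
    have hab : star a ⬝ᵥ b = 0 := Finset.sum_eq_zero fun i _ => by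
      by_cases hi : i ∈ I <;> simp [a, b, hi]
    exact (hA.dotProduct_mulVec_pos h).ne' (hAa ▸ hab)
  have hb : b = 0 := by rw [← hAa, ha, mulVec_zero]
  intro i
  by_cases hi : i ∈ I
  · simpa [b, hi] using congr_fun hb i
  · simpa [a, hi] using congr_fun ha i

section SimpleRoots

variable (R : Type*) [Ring R] (n : ℕ)

def simpleRootMatrix : Matrix (Fin (n + 1)) (Fin n) R :=
  of fun k i => (if k = i.castSucc then 1 else 0) - (if k = i.succ then 1 else 0)

def prefixSumMatrix : Matrix (Fin n) (Fin (n + 1)) R :=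
  of fun i k => if k ≤ i.castSucc then 1 else 0

theorem prefixSumMatrix_mul_simpleRootMatrix :
    prefixSumMatrix R n * simpleRootMatrix R n = 1 := by
  ext i j
  simp only [prefixSumMatrix, simpleRootMatrix, mul_apply, of_apply, one_apply, mul_sub, mul_ite,
    mul_one, mul_zero, Finset.sum_sub_distrib, Finset.sum_ite_eq', Finset.mem_univ, if_true]
  simp only [Fin.ext_iff, Fin.le_iff_val_le_val, Fin.val_castSucc, Fin.val_succ]
  split_ifs <;> first | omega | simp

theorem simpleRootMatrix_mulVec_injective : Function.Injective (simpleRootMatrix R n).mulVec :=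
  Function.LeftInverse.injective (g := (prefixSumMatrix R n *ᵥ ·)) fun x => by
    simp only [mulVec_mulVec, prefixSumMatrix_mul_simpleRootMatrix, one_mulVec]

theorem simpleRootMatrix_transpose_mul_self :
    (simpleRootMatrix ℚ n)ᵀ * simpleRootMatrix ℚ n = cartanAQ n := by
  ext i j
  simp only [simpleRootMatrix, cartanAQ, mul_apply, transpose_apply, of_apply, mul_sub, sub_mul,
    ite_mul, one_mul, zero_mul, Finset.sum_sub_distrib, Finset.sum_ite_eq', Finset.mem_univ,
    if_true]
  simp only [Fin.ext_iff, Fin.val_castSucc, Fin.val_succ]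
  split_ifs <;> first | omega | norm_num

theorem cartanAQ_posDef : (cartanAQ n).PosDef := by
  rw [← simpleRootMatrix_transpose_mul_self, ← conjTranspose_eq_transpose_of_trivial]
  exact .conjTranspose_mul_self _ (simpleRootMatrix_mulVec_injective ℚ n)

end SimpleRoots

/-- For every subset `I ⊆ {1,…,n}`, the columns `-c_i` of `-C(A_n)` for `i ∉ I`
together with the standard basis vectors `e_i` for `i ∈ I` are linearly independent
over `ℚ`; hence each maximal cone `σ_I` of the fan `Υ(A_n)` is simplicial of full
dimension `n`. -/
theorem cone_generators_linearIndependent (n : ℕ) (I : Finset (Fin n)) :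
    LinearIndependent ℚ (fun i : Fin n =>
      if i ∈ I then (Pi.single i 1 : Fin n → ℚ) else fun j => -(cartanAQ n j i)) :=
  (cartanAQ_posDef n).linearIndependent_ite_single_neg_col I
end

section
/- Let R be an integral domain, y_0, …, y_n ∈ R all nonzero, and b_1, …, b_{n−1} ∈ R such that y_{i−1} y_{i+1} = b_i · y_i^2 for all 1 ≤ i ≤ n−1. Then for all 0 ≤ i < j < n one has y_i · y_{j+1} = (∏_{k=i+1}^{j} b_k) · y_{i+1} · y_j. -/
/-!
Induction on `j`: multiplying the relation for `j` by `y j` and substituting the consecutive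
relation `y j * y (j + 2) = b (j + 1) * y (j + 1) ^ 2` gives `y j` times the relation for
`j + 1`, and the nonzero factor `y j` cancels.
-/

section ChainRelations

variable {M : Type*} [CommMonoidWithZero M] [IsCancelMulZero M] {y b : ℕ → M}

theorem mul_eq_mul_mul_succ_of_mul_eq {i j : ℕ} {c : M} (hyj : y j ≠ 0)
    (hij : y i * y (j + 1) = c * (y (i + 1) * y j))
    (hj : y j * y (j + 2) = b (j + 1) * y (j + 1) ^ 2) :
    y i * y (j + 2) = c * b (j + 1) * (y (i + 1) * y (j + 1)) := by
  refine mul_right_cancel₀ hyj ?_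
  calc y i * y (j + 2) * y j = y i * (y j * y (j + 2)) := by ac_rfl
    _ = y i * y (j + 1) * (b (j + 1) * y (j + 1)) := by rw [hj, sq]; ac_rfl
    _ = c * b (j + 1) * (y (i + 1) * y (j + 1)) * y j := by rw [hij]; ac_rfl

theorem mul_eq_prod_mul_of_forall_mul_eq {i j : ℕ} (hij : i < j)
    (hy : ∀ k, i < k → k < j → y k ≠ 0)
    (hb : ∀ k, i < k → k ≤ j → y (k - 1) * y (k + 1) = b k * y k ^ 2) :
    y i * y (j + 1) = (∏ k ∈ Finset.Icc (i + 1) j, b k) * (y (i + 1) * y j) := by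
  induction j, hij using Nat.le_induction with
  | base =>
    rw [Finset.Icc_self, Finset.prod_singleton]
    simpa [sq, mul_assoc] using hb (i + 1) (by omega) le_rfl
  | succ j hij ih =>
    rw [Finset.prod_Icc_succ_top (by omega)]
    refine mul_eq_mul_mul_succ_of_mul_eq (hy j (by omega) (by omega))
      (ih (fun k hik hkj ↦ hy k hik (by omega)) fun k hik hkj ↦ hb k hik (by omega)) ?_
    simpa using hb (j + 1) (by omega) le_rfl

end ChainRelations

/-- Let `R` be an integral domain, `y_0, …, y_n ∈ R` all nonzero, and
`b_1, …, b_{n-1} ∈ R` with `y_{i-1} y_{i+1} = b_i y_i²` for `1 ≤ i ≤ n-1`. Then for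
all `0 ≤ i < j < n` one has `y_i y_{j+1} = (∏_{k=i+1}^{j} b_k) y_{i+1} y_j`. -/
theorem chain_quadric_relations (R : Type*) [CommRing R] [IsDomain R] (n : ℕ)
    (y b : ℕ → R)
    (hy : ∀ i, i ≤ n → y i ≠ 0)
    (hb : ∀ i, 1 ≤ i → i ≤ n - 1 → y (i - 1) * y (i + 1) = b i * (y i) ^ 2) :
    ∀ i j, i < j → j < n →
      y i * y (j + 1) = (∏ k ∈ Finset.Icc (i + 1) j, b k) * (y (i + 1) * y j) := by
  intro i j hij hjn
  exact mul_eq_prod_mul_of_forall_mul_eq hij (fun k _ _ ↦ hy k (by omega))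
    fun k hik hkj ↦ hb k (by omega) (by omega)
end
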